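/- arXiv:2410.03968 — 3 statements merged into one kernel-verified Lean document; each statement's English description precedes it below -/
import Mathlib

section
/- Fix a probability vector p̂ ∈ Δ(V) with p̂_1 ≥ … ≥ p̂_d > 0 and ε with p̂_d ≤ ε < p̂_1. Let î = max{i : p̂_i > ε}, ŵ_i = ε / log(p̂_i/(p̂_i − ε)) for i ≤ î, and let Î = max{I ≤ î : Σ_{i=1}^{I−1} ŵ_i log(p̂_i/p̂_I) ≤ ε}. Define q̃ ∈ Δ(V) by q̃_i = ŵ_i / (Σ_{k=1}^{Î} ŵ_k) for 1 ≤ i ≤ Î and q̃_i = 0 for i > Î. Then q̃ is optimal for the one-step Decoding Game: for every q ∈ Δ(V), inf_{p ∈ N(p̂)} Σ_i q_i log p_i ≤ inf_{p ∈ N(p̂)} Σ_i q̃_i log p_i (infima in the extended reals). -/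
open Finset

noncomputable def elog (x : ℝ) : EReal := if x ≤ 0 then ⊥ else ((Real.log x : ℝ) : EReal)

def simplex (d : ℕ) : Set (Fin d → ℝ) := {p | (∀ i, 0 ≤ p i) ∧ ∑ i, p i = 1}

noncomputable def dTV {d : ℕ} (p q : Fin d → ℝ) : ℝ := (∑ i, |p i - q i|) / 2

def nbhd {d : ℕ} (phat : Fin d → ℝ) (ε : ℝ) : Set (Fin d → ℝ) :=
  {p | p ∈ simplex d ∧ dTV p phat ≤ ε}

noncomputable def obj {d : ℕ} (q p : Fin d → ℝ) : EReal :=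
  ∑ i, ((q i : ℝ) : EReal) * elog (p i)

/-- `ŵ_i = ε / log(p̂_i/(p̂_i − ε))`. -/
noncomputable def what {d : ℕ} (phat : Fin d → ℝ) (ε : ℝ) (i : Fin d) : ℝ :=
  ε / Real.log (phat i / (phat i - ε))

/-!
Let `S = {i ≤ Î}` and `L = (∑_{i ∈ S} ŵ_i log p̂_i - ε) / ∑_{i ∈ S} ŵ_i`; both sides of the
inequality are compared with `L`.

Lower bound for `q̃`: by concavity of `log` on `[p̂_i - ε, p̂_i]`, the weight `ŵ_i` is exactly
the one for which `ŵ_i (log p̂_i - log p_i) ≤ (p̂_i - p_i)⁺` whenever `p̂_i - p_i ≤ ε`, and the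
positive parts of `p̂ - p` add up to `d_TV(p, p̂) ≤ ε`.

Upper bound for any `q`: if `q` charges a coordinate with `p̂_j ≤ ε`, the adversary moves all of
`p̂_j` away and the objective is `-∞`. Otherwise it moves mass `ε` from the coordinate `j` of `S`
maximising `r = q_j / ŵ_j` to a coordinate with `p̂_k ≤ ε`, which costs `q` exactly `ε r`.
Comparing `log p̂_i` with a threshold `t` separating `S` from its complement gives the bound `L`
provided `(r ∑ ŵ - 1)(∑_{i ∈ S} ŵ_i log (p̂_i / e^t) - ε) ≤ 0`; the choice `t = log p̂_Î` (when
`r ∑ ŵ ≥ 1`) or `t = log p̂_{Î+1}` (otherwise) makes this the defining property of `Î`.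
-/

lemma EReal.coe_finset_sum {ι : Type*} (s : Finset ι) (f : ι → ℝ) :
    ((∑ i ∈ s, f i : ℝ) : EReal) = ∑ i ∈ s, (f i : EReal) :=
  map_sum (⟨⟨((↑) : ℝ → EReal), EReal.coe_zero⟩, EReal.coe_add⟩ : ℝ →+ EReal) f s

lemma Real.log_div_sub_pos {a ε : ℝ} (hε : 0 < ε) (ha : ε < a) : 0 < Real.log (a / (a - ε)) :=
  Real.log_pos ((one_lt_div (sub_pos.2 ha)).2 (by linarith))

/-- `log` lies above its chord over `[a - ε, a]`. -/
lemma Real.mul_log_sub_log_le_of_sub_le {a x ε : ℝ} (hε : 0 < ε) (hxa : x ≤ a)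
    (hax : a - x ≤ ε) (ha : ε < a) :
    ε * (Real.log a - Real.log x) ≤ (a - x) * Real.log (a / (a - ε)) := by
  have ha0 : 0 < a := hε.trans ha
  have haε : 0 < a - ε := sub_pos.2 ha
  set t := (a - x) / ε
  have htε : t * ε = a - x := div_mul_cancel₀ _ hε.ne'
  have hconc := strictConcaveOn_log_Ioi.concaveOn.2 (Set.mem_Ioi.2 ha0) (Set.mem_Ioi.2 haε)
    (sub_nonneg.2 ((div_le_one hε).2 hax)) (div_nonneg (sub_nonneg.2 hxa) hε.le)
    (sub_add_cancel 1 t)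
  have hx : (1 - t) • a + t • (a - ε) = x := by simp only [smul_eq_mul]; linear_combination -htε
  rw [hx, smul_eq_mul, smul_eq_mul] at hconc
  rw [Real.log_div ha0.ne' haε.ne', ← htε]
  linarith [mul_le_mul_of_nonneg_left hconc hε.le]

lemma sum_mul_sub_le_div_of_threshold {ι : Type*} [Fintype ι] {S : Finset ι} {q w ℓ : ι → ℝ}
    {r t ε : ℝ} (hq0 : ∀ i, 0 ≤ q i) (hq1 : ∑ i, q i = 1) (hW : 0 < ∑ i ∈ S, w i)
    (hqw : ∀ i ∈ S, q i ≤ r * w i) (hS : ∀ i ∈ S, t ≤ ℓ i) (hSc : ∀ i ∉ S, ℓ i ≤ t)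
    (hsign : (r * ∑ i ∈ S, w i - 1) * (∑ i ∈ S, w i * (ℓ i - t) - ε) ≤ 0) :
    ∑ i, q i * ℓ i - ε * r ≤ (∑ i ∈ S, w i * ℓ i - ε) / ∑ i ∈ S, w i := by
  have key : ∑ i, q i * (ℓ i - t) ≤ r * ∑ i ∈ S, w i * (ℓ i - t) :=
    calc ∑ i, q i * (ℓ i - t)
        ≤ ∑ i ∈ S, q i * (ℓ i - t) := sum_le_sum_of_subset_of_nonpos' (subset_univ S)
          fun i _ hi => mul_nonpos_of_nonneg_of_nonpos (hq0 i) (sub_nonpos.2 (hSc i hi))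
      _ ≤ ∑ i ∈ S, r * w i * (ℓ i - t) :=
          sum_le_sum fun i hi => mul_le_mul_of_nonneg_right (hqw i hi) (sub_nonneg.2 (hS i hi))
      _ = r * ∑ i ∈ S, w i * (ℓ i - t) := by simp only [mul_sum, mul_assoc]
  simp only [mul_sub, sum_sub_distrib, ← sum_mul, hq1] at key hsign
  rw [le_div_iff₀ hW]
  nlinarith [mul_le_mul_of_nonneg_right key hW.le]

section DecodingGame

variable {d : ℕ}

lemma what_mul_log_div {phat : Fin d → ℝ} {ε : ℝ} {i : Fin d} (hε : 0 < ε) (hi : ε < phat i) :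
    what phat ε i * Real.log (phat i / (phat i - ε)) = ε :=
  div_mul_cancel₀ _ (Real.log_div_sub_pos hε hi).ne'

lemma what_pos {phat : Fin d → ℝ} {ε : ℝ} {i : Fin d} (hε : 0 < ε) (hi : ε < phat i) :
    0 < what phat ε i :=
  div_pos hε (Real.log_div_sub_pos hε hi)

lemma log_sub_sub_log_eq_neg_div_what {phat : Fin d → ℝ} {ε : ℝ} {i : Fin d} (hε : 0 < ε)
    (hi : ε < phat i) :
    Real.log (phat i - ε) - Real.log (phat i) = -(ε / what phat ε i) := by
  have hw := what_mul_log_div hε hi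
  rw [Real.log_div (hε.trans hi).ne' (sub_pos.2 hi).ne'] at hw
  rw [neg_div', eq_div_iff (what_pos hε hi).ne']
  linear_combination -hw

lemma what_mul_log_sub_log_le {phat : Fin d → ℝ} {ε x : ℝ} {i : Fin d} (hε : 0 < ε)
    (hi : ε < phat i) (hx : phat i - x ≤ ε) :
    what phat ε i * (Real.log (phat i) - Real.log x) ≤ max (phat i - x) 0 := by
  rcases le_total (phat i) x with hix | hxi
  · have hlog : Real.log (phat i) ≤ Real.log x := Real.log_le_log (hε.trans hi) hix
    exact (mul_nonpos_of_nonneg_of_nonpos (what_pos hε hi).le (by linarith)).trans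
      (le_max_right _ _)
  · have hlog := Real.log_div_sub_pos hε hi
    rw [what, div_mul_eq_mul_div, div_le_iff₀ hlog]
    exact (Real.mul_log_sub_log_le_of_sub_le hε hxi hx hi).trans
      (mul_le_mul_of_nonneg_right (le_max_left _ _) hlog.le)

lemma obj_eq_coe_sum {q p : Fin d → ℝ} (h : ∀ i, q i ≠ 0 → 0 < p i) :
    obj q p = ((∑ i, q i * Real.log (p i) : ℝ) : EReal) := by
  rw [obj, EReal.coe_finset_sum]
  refine sum_congr rfl fun i _ => ?_
  by_cases hq : q i = 0
  · simp [hq]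
  · rw [elog, if_neg (h i hq).not_ge, EReal.coe_mul]

lemma obj_eq_bot {q p : Fin d → ℝ} {j : Fin d} (hqj : 0 < q j) (hpj : p j ≤ 0) : obj q p = ⊥ := by
  rw [obj, ← add_sum_erase _ _ (mem_univ j), elog, if_pos hpj, EReal.coe_mul_bot_of_pos hqj,
    EReal.bot_add]

lemma sum_max_sub_zero_eq_dTV {p phat : Fin d → ℝ} (h : ∑ i, p i = ∑ i, phat i) :
    ∑ i, max (phat i - p i) 0 = dTV p phat := by
  have hmax : ∀ i, max (phat i - p i) 0 = ((phat i - p i) + |p i - phat i|) / 2 := fun i => by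
    rw [abs_sub_comm]
    rcases le_total 0 (phat i - p i) with h | h
    · rw [max_eq_left h, abs_of_nonneg h]; ring
    · rw [max_eq_right h, abs_of_nonpos h]; ring
  rw [sum_congr rfl fun i _ => hmax i, ← sum_div, sum_add_distrib, sum_sub_distrib, h, sub_self,
    zero_add, dTV]

lemma sum_max_sub_zero_le_of_mem_nbhd {p phat : Fin d → ℝ} {ε : ℝ} (hphat : phat ∈ simplex d)
    (hp : p ∈ nbhd phat ε) : ∑ i, max (phat i - p i) 0 ≤ ε := by
  rw [sum_max_sub_zero_eq_dTV (hp.1.2.trans hphat.2.symm)]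
  exact hp.2

lemma sub_le_of_mem_nbhd {p phat : Fin d → ℝ} {ε : ℝ} (hphat : phat ∈ simplex d)
    (hp : p ∈ nbhd phat ε) (i : Fin d) : phat i - p i ≤ ε :=
  (le_max_left _ _).trans <| (single_le_sum (fun j _ => le_max_right (phat j - p j) 0)
    (mem_univ i)).trans (sum_max_sub_zero_le_of_mem_nbhd hphat hp)

lemma sum_what_mul_log_sub_log_le {p phat : Fin d → ℝ} {ε : ℝ} {S : Finset (Fin d)}
    (hphat : phat ∈ simplex d) (hε : 0 < ε) (hS : ∀ i ∈ S, ε < phat i) (hp : p ∈ nbhd phat ε) :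
    ∑ i ∈ S, what phat ε i * (Real.log (phat i) - Real.log (p i)) ≤ ε :=
  calc ∑ i ∈ S, what phat ε i * (Real.log (phat i) - Real.log (p i))
      ≤ ∑ i ∈ S, max (phat i - p i) 0 :=
        sum_le_sum fun i hi => what_mul_log_sub_log_le hε (hS i hi) (sub_le_of_mem_nbhd hphat hp i)
    _ ≤ ∑ i, max (phat i - p i) 0 :=
        sum_le_sum_of_subset_of_nonneg (subset_univ S) fun _ _ _ => le_max_right _ _
    _ ≤ ε := sum_max_sub_zero_le_of_mem_nbhd hphat hp

noncomputable def gameValue (phat : Fin d → ℝ) (ε : ℝ) (S : Finset (Fin d)) : ℝ :=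
  (∑ i ∈ S, what phat ε i * Real.log (phat i) - ε) / ∑ i ∈ S, what phat ε i

lemma gameValue_le_obj {p phat qt : Fin d → ℝ} {ε : ℝ} {S : Finset (Fin d)}
    (hphat : phat ∈ simplex d) (hε : 0 < ε) (hS : ∀ i ∈ S, ε < phat i)
    (hqt : ∀ i, qt i = if i ∈ S then what phat ε i / ∑ k ∈ S, what phat ε k else 0)
    (hp : p ∈ nbhd phat ε) : (gameValue phat ε S : EReal) ≤ obj qt p := by
  have hpS : ∀ i ∈ S, 0 < p i := fun i hi => by
    linarith [hS i hi, sub_le_of_mem_nbhd hphat hp i]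
  have hsupp : ∀ i, qt i ≠ 0 → i ∈ S := fun i hi => by_contra fun h => hi (by simp [hqt, h])
  rw [obj_eq_coe_sum fun i hi => hpS i (hsupp i hi), EReal.coe_le_coe_iff, gameValue]
  simp only [hqt, ite_mul, zero_mul, sum_ite_mem, univ_inter, div_mul_eq_mul_div, ← sum_div]
  refine div_le_div_of_nonneg_right ?_ (sum_nonneg fun i hi => (what_pos hε (hS i hi)).le)
  have := sum_what_mul_log_sub_log_le hphat hε hS hp
  simp only [mul_sub, sum_sub_distrib] at this
  linarith

def moveMass (p : Fin d → ℝ) (j k : Fin d) (δ : ℝ) : Fin d → ℝ :=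
  p - Pi.single j δ + Pi.single k δ

lemma moveMass_mem_nbhd {phat : Fin d → ℝ} {j k : Fin d} {δ ε : ℝ} (hphat : phat ∈ simplex d)
    (hδ : 0 ≤ δ) (hδj : δ ≤ phat j) (hδε : δ ≤ ε) : moveMass phat j k δ ∈ nbhd phat ε := by
  refine ⟨⟨fun i => ?_, ?_⟩, ?_⟩
  · simp only [moveMass, Pi.add_apply, Pi.sub_apply, Pi.single_apply]
    split_ifs <;> subst_vars <;> linarith [hphat.1 i]
  · simp [moveMass, sum_add_distrib, sum_sub_distrib, hphat.2]
  · calc dTV (moveMass phat j k δ) phat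
        = (∑ i, |Pi.single k δ i - Pi.single j δ i|) / 2 := by
          simp only [dTV, moveMass, Pi.add_apply, Pi.sub_apply]
          congr 1; exact sum_congr rfl fun i _ => by ring_nf
      _ ≤ (∑ i, (|Pi.single k δ i| + |Pi.single j δ i|)) / 2 := by
          gcongr with i; exact abs_sub _ _
      _ ≤ ε := by
          rw [sum_add_distrib]
          simp only [Pi.single_apply, apply_ite abs, abs_zero, sum_ite_eq', mem_univ, if_true,
            abs_of_nonneg hδ]
          linarith

lemma moveMass_pos {p : Fin d → ℝ} {j k : Fin d} {δ : ℝ} (hp : ∀ i, 0 < p i) (hδ : 0 ≤ δ)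
    (hδj : δ < p j) (i : Fin d) : 0 < moveMass p j k δ i := by
  simp only [moveMass, Pi.add_apply, Pi.sub_apply, Pi.single_apply]
  split_ifs <;> subst_vars <;> linarith [hp i]

lemma sum_mul_log_moveMass {p q : Fin d → ℝ} {j k : Fin d} {δ : ℝ} (hjk : j ≠ k) (hqk : q k = 0) :
    ∑ i, q i * Real.log (moveMass p j k δ i)
      = ∑ i, q i * Real.log (p i) + q j * (Real.log (p j - δ) - Real.log (p j)) := by
  rw [← sub_eq_iff_eq_add', ← sum_sub_distrib, Fintype.sum_eq_single j]
  · simp [moveMass, hjk, mul_sub]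
  · intro i hij
    by_cases hik : i = k
    · simp [hik, hqk]
    · simp [moveMass, hij, hik]

lemma sum_mul_log_sub_le_gameValue {phat q : Fin d → ℝ} {ε r : ℝ} {ihat Ihat : Fin d}
    (hpos : ∀ i, 0 < phat i) (hsort : Antitone phat) (hε : 0 < ε)
    (hihat : ∀ i, ε < phat i ↔ i ≤ ihat) (hIhat_le : Ihat ≤ ihat)
    (hIhat_cond : ∑ i ∈ Iio Ihat, what phat ε i * Real.log (phat i / phat Ihat) ≤ ε)
    (hIhat_max : ∀ I, I ≤ ihat →
      ∑ i ∈ Iio I, what phat ε i * Real.log (phat i / phat I) ≤ ε → I ≤ Ihat)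
    (hq : q ∈ simplex d) (hqsupp : ∀ i, phat i ≤ ε → q i = 0)
    (hqw : ∀ i ∈ Iic Ihat, q i ≤ r * what phat ε i) :
    ∑ i, q i * Real.log (phat i) - ε * r ≤ gameValue phat ε (Iic Ihat) := by
  have hW : 0 < ∑ i ∈ Iic Ihat, what phat ε i :=
    sum_pos (fun i hi => what_pos hε ((hihat i).2 ((mem_Iic.1 hi).trans hIhat_le))) nonempty_Iic
  have hexcess : ∀ I, ∑ i ∈ Iic Ihat, what phat ε i * (Real.log (phat i) - Real.log (phat I))
      = ∑ i ∈ Iic Ihat, what phat ε i * Real.log (phat i / phat I) := fun I =>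
    sum_congr rfl fun i _ => by rw [Real.log_div (hpos i).ne' (hpos I).ne']
  have hlog_le : ∀ {i j}, i ≤ j → Real.log (phat j) ≤ Real.log (phat i) := fun hij =>
    Real.log_le_log (hpos _) (hsort hij)
  rcases le_or_gt 1 (r * ∑ i ∈ Iic Ihat, what phat ε i) with hrW | hrW
  · refine sum_mul_sub_le_div_of_threshold (ℓ := fun i => Real.log (phat i)) hq.1 hq.2 hW hqw
      (fun i hi => hlog_le (mem_Iic.1 hi)) (fun i hi => hlog_le (not_le.1 (mt mem_Iic.2 hi)).le)
      (mul_nonpos_of_nonneg_of_nonpos (by linarith) ?_)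
    rw [hexcess, Iic_eq_cons_Iio, sum_cons, div_self (hpos Ihat).ne', Real.log_one, mul_zero,
      zero_add]
    linarith
  · have hlt : Ihat < ihat := by
      by_contra! hge
      have hQ : ∑ i ∈ Iic Ihat, q i = 1 := by
        rw [← hq.2]
        exact sum_subset (subset_univ _) fun i _ hi =>
          hqsupp i (not_lt.1 fun h => hi (mem_Iic.2 (((hihat i).1 h).trans hge)))
      linarith [(sum_le_sum hqw).trans_eq (mul_sum _ _ _).symm]
    have hsucc : ¬IsMax Ihat := not_isMax_of_lt hlt
    have hIio : Iio (Order.succ Ihat) = Iic Ihat := by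
      ext i; simp [Order.lt_succ_iff_of_not_isMax hsucc]
    have hexceeds :=
      mt (hIhat_max _ (Order.succ_le_of_lt hlt)) (Order.lt_succ_of_not_isMax hsucc).not_ge
    refine sum_mul_sub_le_div_of_threshold (ℓ := fun i => Real.log (phat i)) hq.1 hq.2 hW hqw
      (fun i hi => hlog_le ((mem_Iic.1 hi).trans (Order.le_succ _)))
      (fun i hi => hlog_le ((Order.succ_le_iff_of_not_isMax hsucc).2 (not_le.1 (mt mem_Iic.2 hi))))
      (mul_nonpos_of_nonpos_of_nonneg (by linarith) ?_)
    rw [hexcess, ← hIio]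
    linarith [not_le.1 hexceeds]

lemma exists_mem_nbhd_obj_eq_bot {phat q : Fin d → ℝ} {ε : ℝ} {j k : Fin d}
    (hphat : phat ∈ simplex d) (hjk : j ≠ k) (hqj : 0 < q j) (hjε : phat j ≤ ε) :
    ∃ p ∈ nbhd phat ε, obj q p = ⊥ :=
  ⟨moveMass phat j k (phat j), moveMass_mem_nbhd hphat (hphat.1 j) le_rfl hjε,
    obj_eq_bot hqj (by simp [moveMass, hjk])⟩

lemma exists_mem_nbhd_obj_le_gameValue_of_support {phat q : Fin d → ℝ} {ε : ℝ} {k ihat Ihat : Fin d}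
    (hphat : phat ∈ simplex d) (hpos : ∀ i, 0 < phat i) (hsort : Antitone phat) (hk : phat k ≤ ε)
    (hihat : ∀ i, ε < phat i ↔ i ≤ ihat) (hIhat_le : Ihat ≤ ihat)
    (hIhat_cond : ∑ i ∈ Iio Ihat, what phat ε i * Real.log (phat i / phat Ihat) ≤ ε)
    (hIhat_max : ∀ I, I ≤ ihat →
      ∑ i ∈ Iio I, what phat ε i * Real.log (phat i / phat I) ≤ ε → I ≤ Ihat)
    (hq : q ∈ simplex d) (hqsupp : ∀ i, phat i ≤ ε → q i = 0) :
    ∃ p ∈ nbhd phat ε, obj q p ≤ gameValue phat ε (Iic Ihat) := by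
  have hε : 0 < ε := (hpos k).trans_le hk
  have hS : ∀ i ∈ Iic Ihat, ε < phat i := fun i hi => (hihat i).2 ((mem_Iic.1 hi).trans hIhat_le)
  obtain ⟨j, hjS, hjmax⟩ := exists_max_image (Iic Ihat) (fun i => q i / what phat ε i) nonempty_Iic
  have hjk : j ≠ k := fun h => (hS j hjS).not_ge (h ▸ hk)
  have hqw : ∀ i ∈ Iic Ihat, q i ≤ q j / what phat ε j * what phat ε i := fun i hi =>
    (div_le_iff₀ (what_pos hε (hS i hi))).1 (hjmax i hi)
  refine ⟨moveMass phat j k ε, moveMass_mem_nbhd hphat hε.le (hS j hjS).le le_rfl, ?_⟩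
  rw [obj_eq_coe_sum fun i _ => moveMass_pos hpos hε.le (hS j hjS) i,
    sum_mul_log_moveMass hjk (hqsupp k hk), log_sub_sub_log_eq_neg_div_what hε (hS j hjS),
    EReal.coe_le_coe_iff]
  convert sum_mul_log_sub_le_gameValue hpos hsort hε hihat hIhat_le hIhat_cond hIhat_max hq hqsupp
    hqw using 1
  ring

end DecodingGame

/-- the truncation-normalization strategy `q̃` (with weights `ŵ` and
truncation threshold `Î`) is optimal for the one-step Decoding Game. -/
theorem stmt1 {d : ℕ} (hd : 0 < d) (phat : Fin d → ℝ) (ε : ℝ)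
    (hmem : phat ∈ simplex d)
    (hpos : ∀ i, 0 < phat i)
    (hsort : ∀ i j : Fin d, i ≤ j → phat j ≤ phat i)
    (heps_lo : phat ⟨d - 1, by omega⟩ ≤ ε)
    (ihat : Fin d)
    (hihat1 : ε < phat ihat)
    (hihat2 : ∀ i : Fin d, ε < phat i → i ≤ ihat)
    (Ihat : Fin d)
    (hIhat_le : Ihat ≤ ihat)
    (hIhat_cond : ∑ i ∈ univ.filter (· < Ihat),
        what phat ε i * Real.log (phat i / phat Ihat) ≤ ε)
    (hIhat_max : ∀ I : Fin d, I ≤ ihat →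
        (∑ i ∈ univ.filter (· < I), what phat ε i * Real.log (phat i / phat I) ≤ ε) →
        I ≤ Ihat)
    (qt : Fin d → ℝ)
    (hqt : ∀ i : Fin d,
        qt i = if i ≤ Ihat then what phat ε i / ∑ k ∈ univ.filter (· ≤ Ihat), what phat ε k
          else 0) :
    ∀ q ∈ simplex d,
      ⨅ p ∈ nbhd phat ε, obj q p ≤ ⨅ p ∈ nbhd phat ε, obj qt p := by
  simp only [filter_gt_eq_Iio, filter_ge_eq_Iic] at hIhat_cond hIhat_max hqt
  have hε : 0 < ε := (hpos _).trans_le heps_lo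
  have hihat : ∀ i, ε < phat i ↔ i ≤ ihat :=
    fun i => ⟨hihat2 i, fun hi => hihat1.trans_le (hsort i ihat hi)⟩
  intro q hq
  obtain ⟨p, hp, hle⟩ : ∃ p ∈ nbhd phat ε, obj q p ≤ gameValue phat ε (Iic Ihat) := by
    by_cases hcharged : ∃ j, phat j ≤ ε ∧ 0 < q j
    · obtain ⟨j, hjε, hqj⟩ := hcharged
      obtain ⟨p, hp, hbot⟩ := exists_mem_nbhd_obj_eq_bot hmem
        (fun h => (h ▸ hjε).not_gt hihat1) hqj hjε
      exact ⟨p, hp, hbot ▸ bot_le⟩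
    · push Not at hcharged
      exact exists_mem_nbhd_obj_le_gameValue_of_support hmem hpos hsort heps_lo
        hihat hIhat_le hIhat_cond hIhat_max hq fun i hi => (hcharged i hi).antisymm (hq.1 i)
  calc ⨅ p ∈ nbhd phat ε, obj q p ≤ obj q p := iInf₂_le p hp
    _ ≤ gameValue phat ε (Iic Ihat) := hle
    _ ≤ ⨅ p ∈ nbhd phat ε, obj qt p := le_iInf₂ fun p hp =>
      gameValue_le_obj hmem hε (fun i hi => (hihat i).2 ((mem_Iic.1 hi).trans hIhat_le))
        (by simpa only [mem_Iic] using hqt) hp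
end

section
/- Fix T ≥ 1, ε > 0, a model P̂ and a strategy Q on V^T (both given by conditional distributions p̂_t(x_{<t}), q_t(x_{<t}) ∈ Δ(V)). Let N(P̂) be the set of models P with d_TV(p_t(x_{<t}), p̂_t(x_{<t})) ≤ ε for all t ≤ T and x_{<t} ∈ V^{t−1}. Then the worst-case expected log-likelihood decomposes tokenwise: min over P ∈ N(P̂) of E_Q[ Σ_{t=1}^T log p_t(X_{<t})_{X_t} ] equals Σ_{t=1}^T E_{X_{<t} ∼ Q}[ min_{p ∈ N(p̂_t(X_{<t}))} Σ_i q_t(X_{<t})_i log p_i ], where N(p̂) = {p ∈ Δ(V) : d_TV(p, p̂) ≤ ε} and all values are in the extended reals. -/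
open Finset

/-- A model on `V^T`: for each time `t` and context `x_{<t} ∈ V^t` a vector of
conditional next-token weights. -/
abbrev Model (d T : ℕ) := (t : Fin T) → ((Fin t → Fin d) → (Fin d → ℝ))

/-- All conditional rows of the model are probability vectors. -/
def validModel {d T : ℕ} (P : Model d T) : Prop := ∀ t x, P t x ∈ simplex d

/-- `N(P̂)`: models whose every conditional row is within TV distance `ε` of `P̂`'s. -/
def modelNbhd {d T : ℕ} (Phat : Model d T) (ε : ℝ) : Set (Model d T) :=
  {P | validModel P ∧ ∀ t x, dTV (P t x) (Phat t x) ≤ ε}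

/-- Probability assigned by a model `Q` to a full sequence `x ∈ V^T`. -/
noncomputable def seqProb {d T : ℕ} (Q : Model d T) (x : Fin T → Fin d) : ℝ :=
  ∏ t, Q t (fun s => x ⟨s, s.isLt.trans t.isLt⟩) (x t)

/-- `L^T(Q,P) = E_Q [ Σ_t log p_t(X_{<t})_{X_t} ]` in the extended reals. -/
noncomputable def Lval {d T : ℕ} (Q P : Model d T) : EReal :=
  ∑ x : Fin T → Fin d, ((seqProb Q x : ℝ) : EReal) *
    ∑ t, elog (P t (fun s => x ⟨s, s.isLt.trans t.isLt⟩) (x t))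

/-- Probability assigned by a model `Q` to the context `x ∈ V^t` (for time `t`). -/
noncomputable def ctxProb {d T : ℕ} (Q : Model d T) (t : Fin T) (x : Fin t → Fin d) : ℝ :=
  ∏ s : Fin t, Q ⟨s, s.isLt.trans t.isLt⟩ (fun r => x ⟨r, r.isLt.trans s.isLt⟩) (x s)


lemma ecoe_mul_add (r : ℝ) (hr : 0 ≤ r) (a b : EReal) :
    (r : EReal) * (a + b) = (r:EReal)*a + (r:EReal)*b := by
  rcases eq_or_lt_of_le hr with h | h
  · simp [← h]
  · induction a using EReal.rec <;> induction b using EReal.rec <;>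
      simp_all [EReal.coe_mul_bot_of_pos h, EReal.coe_mul_top_of_pos h,
        ← EReal.coe_mul, ← EReal.coe_add, mul_add]

lemma ecoe_mul_sum {ι : Type*} (s : Finset ι) (r : ℝ) (hr : 0 ≤ r) (f : ι → EReal) :
    (r : EReal) * ∑ j ∈ s, f j = ∑ j ∈ s, (r : EReal) * f j := by
  induction s using Finset.cons_induction with
  | empty => simp
  | cons a s ha ih => rw [Finset.sum_cons, Finset.sum_cons, ecoe_mul_add r hr, ih]

lemma sum_ecoe_mul {ι : Type*} (s : Finset ι) (r : ι → ℝ) (hr : ∀ j ∈ s, 0 ≤ r j) (e : EReal) :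
    ((∑ j ∈ s, r j : ℝ) : EReal) * e = ∑ j ∈ s, ((r j : ℝ) : EReal) * e := by
  induction s using Finset.cons_induction with
  | empty => simp
  | cons a s ha ih =>
    rw [Finset.sum_cons, EReal.coe_add, EReal.right_distrib_of_nonneg, Finset.sum_cons,
      ih (fun j hj => hr j (Finset.mem_cons_of_mem hj))]
    · exact_mod_cast hr a (Finset.mem_cons_self a s)
    · have : (0:ℝ) ≤ ∑ j ∈ s, r j := Finset.sum_nonneg fun j hj => hr j (Finset.mem_cons_of_mem hj)
      exact_mod_cast this

noncomputable def erealAddIso (b : ℝ) : EReal ≃o EReal where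
  toFun x := x + (b : EReal)
  invFun x := x + ((-b : ℝ) : EReal)
  left_inv x := by
    show x + (b:EReal) + ((-b:ℝ):EReal) = x
    rw [add_assoc, ← EReal.coe_add, add_neg_cancel, EReal.coe_zero, add_zero]
  right_inv x := by
    show x + ((-b:ℝ):EReal) + (b:EReal) = x
    rw [add_assoc, ← EReal.coe_add, neg_add_cancel, EReal.coe_zero, add_zero]
  map_rel_iff' := by
    intro x y
    exact (EReal.addLECancellable_coe b).add_le_add_iff_right

@[simp] lemma erealAddIso_apply (b : ℝ) (x : EReal) : erealAddIso b x = x + (b : EReal) := rfl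

noncomputable def erealMulIso (c : ℝ) (hc : 0 < c) : EReal ≃o EReal where
  toFun x := (c : EReal) * x
  invFun x := ((c⁻¹ : ℝ) : EReal) * x
  left_inv x := by
    show ((c⁻¹:ℝ):EReal) * ((c:EReal) * x) = x
    rw [← mul_assoc, ← EReal.coe_mul, inv_mul_cancel₀ hc.ne', EReal.coe_one, one_mul]
  right_inv x := by
    show (c:EReal) * (((c⁻¹:ℝ):EReal) * x) = x
    rw [← mul_assoc, ← EReal.coe_mul, mul_inv_cancel₀ hc.ne', EReal.coe_one, one_mul]
  map_rel_iff' := by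
    intro x y
    show (c:EReal) * x ≤ (c:EReal) * y ↔ x ≤ y
    constructor
    · intro h
      have h0 : (0:EReal) ≤ ((c⁻¹:ℝ) : EReal) := by exact_mod_cast (inv_pos.2 hc).le
      have := mul_le_mul_of_nonneg_left h h0
      rwa [← mul_assoc, ← mul_assoc, ← EReal.coe_mul, inv_mul_cancel₀ hc.ne', EReal.coe_one,
        one_mul, one_mul] at this
    · intro h
      exact mul_le_mul_of_nonneg_left h (by exact_mod_cast hc.le)

@[simp] lemma erealMulIso_apply (c : ℝ) (hc : 0 < c) (x : EReal) :
    erealMulIso c hc x = (c : EReal) * x := rfl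

lemma binfi_add_coe {α : Type*} {S : Set α} (h : α → EReal) (b : ℝ) :
    (⨅ x ∈ S, h x) + (b : EReal) = ⨅ x ∈ S, (h x + (b : EReal)) := by
  have h1 : erealAddIso b (⨅ x, ⨅ _ : x ∈ S, h x)
      = ⨅ x, erealAddIso b (⨅ _ : x ∈ S, h x) := (erealAddIso b).map_iInf _
  have h2 : ∀ x : α, erealAddIso b (⨅ _ : x ∈ S, h x) = ⨅ _ : x ∈ S, erealAddIso b (h x) :=
    fun x => (erealAddIso b).map_iInf _
  simp only [h2, erealAddIso_apply] at h1
  exact h1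

lemma binfi_add_of_ne_top {α : Type*} {S : Set α} (hS : S.Nonempty) (h : α → EReal) {b : EReal}
    (hb : b ≠ ⊤) : (⨅ x ∈ S, h x) + b = ⨅ x ∈ S, (h x + b) := by
  induction b using EReal.rec with
  | bot =>
    obtain ⟨x0, hx0⟩ := hS
    simp only [EReal.add_bot]
    have hle : (⨅ x ∈ S, (⊥:EReal)) ≤ ⊥ := iInf₂_le x0 hx0
    exact (le_antisymm hle bot_le).symm
  | coe b => exact binfi_add_coe h b
  | top => exact absurd rfl hb

lemma coe_add_binfi_of_ne_top {α : Type*} {S : Set α} (hS : S.Nonempty) (h : α → EReal) {a : EReal}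
    (ha : a ≠ ⊤) : a + (⨅ x ∈ S, h x) = ⨅ x ∈ S, (a + h x) := by
  rw [add_comm, binfi_add_of_ne_top hS h ha]
  exact iInf_congr fun x => iInf_congr fun _ => add_comm _ _

lemma binfi_ecoe_mul {α : Type*} {S : Set α} (hS : S.Nonempty) (h : α → EReal) {r : ℝ}
    (hr : 0 ≤ r) : ⨅ x ∈ S, (r : EReal) * h x = (r : EReal) * ⨅ x ∈ S, h x := by
  rcases eq_or_lt_of_le hr with h0 | h0
  · obtain ⟨x0, hx0⟩ := hS
    simp only [← h0, EReal.coe_zero, zero_mul]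
    exact le_antisymm (iInf₂_le x0 hx0) (le_iInf₂ fun _ _ => le_rfl)
  · have h1 : erealMulIso r h0 (⨅ x, ⨅ _ : x ∈ S, h x)
        = ⨅ x, erealMulIso r h0 (⨅ _ : x ∈ S, h x) := (erealMulIso r h0).map_iInf _
    have h2 : ∀ x : α, erealMulIso r h0 (⨅ _ : x ∈ S, h x)
        = ⨅ _ : x ∈ S, erealMulIso r h0 (h x) := fun x => (erealMulIso r h0).map_iInf _
    simp only [h2, erealMulIso_apply] at h1
    exact h1.symm

lemma iInf_sum_pi {ι : Type*} [Fintype ι] {X : ι → Type*}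
    (S : ∀ j, Set (X j)) (hS : ∀ j, (S j).Nonempty)
    (g : ∀ j, X j → EReal) (hg : ∀ j, ∀ x ∈ S j, g j x ≤ 0) :
    ⨅ f ∈ {f : ∀ j, X j | ∀ j, f j ∈ S j}, ∑ j, g j (f j)
      = ∑ j, ⨅ x ∈ S j, g j x := by
  classical
  let f0 : ∀ j, X j := fun j => (hS j).some
  have hf0 : f0 ∈ {f : ∀ j, X j | ∀ j, f j ∈ S j} := fun j => (hS j).some_mem
  have key : ∀ s : Finset ι,
      ⨅ f ∈ {f : ∀ j, X j | ∀ j, f j ∈ S j}, ∑ j ∈ s, g j (f j)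
        = ∑ j ∈ s, ⨅ x ∈ S j, g j x := by
    intro s
    induction s using Finset.cons_induction with
    | empty =>
      simp only [Finset.sum_empty]
      exact le_antisymm (iInf₂_le f0 hf0) (le_iInf₂ fun _ _ => le_rfl)
    | cons a s ha ih =>
      simp only [Finset.sum_cons]
      apply le_antisymm
      · -- LHS ≤ Ia + ∑ I
        rw [← ih]
        have hC0 : (⨅ f ∈ {f : ∀ j, X j | ∀ j, f j ∈ S j}, ∑ j ∈ s, g j (f j)) ≤ 0 := by
          refine le_trans (iInf₂_le f0 hf0) (Finset.sum_nonpos fun j _ => hg j _ (hf0 j))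
        have hCne : (⨅ f ∈ {f : ∀ j, X j | ∀ j, f j ∈ S j}, ∑ j ∈ s, g j (f j)) ≠ ⊤ := by
          intro h
          rw [h] at hC0
          exact absurd hC0 (by simp)
        rw [binfi_add_of_ne_top (hS a) _ hCne]
        refine le_iInf₂ fun x hx => ?_
        rw [coe_add_binfi_of_ne_top ⟨f0, hf0⟩ _ (fun h => by simpa [h] using hg a x hx)]
        refine le_iInf₂ fun f hf => ?_
        have hf' : Function.update f a x ∈ {f : ∀ j, X j | ∀ j, f j ∈ S j} := by
          intro j
          rcases eq_or_ne j a with rfl | hj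
          · simpa using hx
          · simpa [Function.update_of_ne hj] using hf j
        refine le_trans (iInf₂_le (Function.update f a x) hf') (le_of_eq ?_)
        congr 1
        · rw [Function.update_self]
        · refine Finset.sum_congr rfl fun j hj => ?_
          have hj' : j ≠ a := fun h => ha (h ▸ hj)
          rw [Function.update_of_ne hj']
      · -- Ia + ∑ I ≤ LHS
        refine le_iInf₂ fun f hf => ?_
        exact add_le_add (iInf₂_le (f a) (hf a)) (by rw [← ih]; exact iInf₂_le f hf)
  have := key Finset.univ
  simpa using this
lemma elog_ne_top (x : ℝ) : elog x ≠ ⊤ := by unfold elog; split <;> simp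

lemma elog_nonpos {x : ℝ} (hx : x ≤ 1) : elog x ≤ 0 := by
  unfold elog; split
  · exact bot_le
  · rename_i h
    push_neg at h
    exact_mod_cast EReal.coe_nonpos.2 (Real.log_nonpos h.le hx)

lemma ecoe_mul_nonpos {r : ℝ} (hr : 0 ≤ r) {a : EReal} (ha : a ≤ 0) : (r : EReal) * a ≤ 0 := by
  have h0 : (0:EReal) ≤ (r:EReal) := by exact_mod_cast hr
  have := mul_le_mul_of_nonneg_left ha h0
  simpa using this
open scoped Classical

def snoc' {d k : ℕ} (z : Fin k → Fin d) (i : Fin d) : Fin (k+1) → Fin d :=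
  fun s => if h : s.1 < k then z ⟨s.1, h⟩ else i

lemma snoc'_lt {d k : ℕ} (z : Fin k → Fin d) (i : Fin d) (s : Fin (k+1)) (hs : s.1 < k) :
    snoc' z i s = z ⟨s.1, hs⟩ := dif_pos hs

lemma snoc'_last {d k : ℕ} (z : Fin k → Fin d) (i : Fin d) (s : Fin (k+1)) (hs : ¬ s.1 < k) :
    snoc' z i s = i := dif_neg hs

lemma Mgen {d T : ℕ} (Q : Model d T) (hQ : validModel Q) :
    ∀ (n k : ℕ) (h : k + n = T) (z : Fin k → Fin d),
      ∑ x ∈ Finset.univ.filter (fun x : Fin T → Fin d =>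
          ∀ s : Fin k, x ⟨s.1, lt_of_lt_of_le s.isLt (by omega)⟩ = z s), seqProb Q x
        = ∏ s : Fin k, Q ⟨s.1, lt_of_lt_of_le s.isLt (by omega)⟩
            (fun r => z ⟨r.1, lt_trans r.isLt s.isLt⟩) (z s) := by
  intro n
  induction n with
  | zero =>
    intro k h z
    have hk : k = T := by omega
    subst hk
    have hfil : Finset.univ.filter (fun x : Fin k → Fin d =>
        ∀ s : Fin k, x ⟨s.1, lt_of_lt_of_le s.isLt (by omega)⟩ = z s) = {z} := by
      ext x
      simp only [Finset.mem_filter, Finset.mem_univ, true_and, Finset.mem_singleton]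
      constructor
      · intro hx; funext s; exact hx s
      · rintro rfl s; rfl
    rw [hfil, Finset.sum_singleton]
    rfl
  | succ n ih =>
    intro k h z
    have hkT : k < T := by omega
    have h' : (k + 1) + n = T := by omega
    have hsplit : ∀ i : Fin d,
        Finset.univ.filter (fun x : Fin T → Fin d =>
            ∀ s : Fin (k+1), x ⟨s.1, lt_of_lt_of_le s.isLt (by omega)⟩ = snoc' z i s)
          = (Finset.univ.filter (fun x : Fin T → Fin d =>
              ∀ s : Fin k, x ⟨s.1, lt_of_lt_of_le s.isLt (by omega)⟩ = z s)).filter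
              (fun x => x ⟨k, hkT⟩ = i) := by
      intro i
      ext x
      simp only [Finset.mem_filter, Finset.mem_univ, true_and]
      constructor
      · intro hx
        refine ⟨fun s => ?_, ?_⟩
        · have hx' := hx ⟨s.1, by omega⟩
          rwa [snoc'_lt z i _ s.isLt] at hx'
        · have hx' := hx ⟨k, by omega⟩
          rwa [snoc'_last z i _ (lt_irrefl k)] at hx'
      · rintro ⟨h1, h2⟩ s
        by_cases hs : s.1 < k
        · rw [snoc'_lt z i s hs]
          exact h1 ⟨s.1, hs⟩
        · rw [snoc'_last z i s hs]
          have hs2 : s = ⟨k, by omega⟩ := Fin.ext (show s.1 = k by omega)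
          rw [hs2]
          exact h2
    calc ∑ x ∈ Finset.univ.filter (fun x : Fin T → Fin d =>
            ∀ s : Fin k, x ⟨s.1, lt_of_lt_of_le s.isLt (by omega)⟩ = z s), seqProb Q x
        = ∑ i : Fin d, ∑ x ∈ (Finset.univ.filter (fun x : Fin T → Fin d =>
              ∀ s : Fin k, x ⟨s.1, lt_of_lt_of_le s.isLt (by omega)⟩ = z s)).filter
              (fun x => x ⟨k, hkT⟩ = i), seqProb Q x :=
          (Finset.sum_fiberwise_of_maps_to (fun x _ => Finset.mem_univ _) _).symm
      _ = ∑ i : Fin d, ∑ x ∈ Finset.univ.filter (fun x : Fin T → Fin d =>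
              ∀ s : Fin (k+1), x ⟨s.1, lt_of_lt_of_le s.isLt (by omega)⟩ = snoc' z i s),
              seqProb Q x := by
          refine Finset.sum_congr rfl fun i _ => ?_
          rw [hsplit i]
      _ = ∑ i : Fin d, ∏ s : Fin (k+1), Q ⟨s.1, lt_of_lt_of_le s.isLt (by omega)⟩
            (fun r => snoc' z i ⟨r.1, lt_trans r.isLt s.isLt⟩) (snoc' z i s) :=
          Finset.sum_congr rfl fun i _ => ih (k+1) h' (snoc' z i)
      _ = ∑ i : Fin d, (∏ s : Fin k, Q ⟨s.1, lt_of_lt_of_le s.isLt (by omega)⟩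
            (fun r => z ⟨r.1, lt_trans r.isLt s.isLt⟩) (z s))
            * Q ⟨k, hkT⟩ (fun r => z ⟨r.1, r.isLt⟩) i := by
          refine Finset.sum_congr rfl fun i _ => ?_
          rw [Fin.prod_univ_castSucc]
          congr 1
          · refine Finset.prod_congr rfl fun s _ => ?_
            have hctx : (fun r : Fin (Fin.castSucc s).1 =>
                  snoc' z i ⟨r.1, lt_trans r.isLt (Fin.castSucc s).isLt⟩)
                = (fun r : Fin s.1 => z ⟨r.1, lt_trans r.isLt s.isLt⟩) := by
              funext r
              exact snoc'_lt z i _ (lt_trans r.isLt s.isLt)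
            have hval : snoc' z i (Fin.castSucc s) = z s := by
              rw [snoc'_lt z i _ s.isLt]
              rfl
            rw [hval]
            exact congrFun (congrArg _ hctx) (z s)
          · have hctx : (fun r : Fin (Fin.last k).1 =>
                  snoc' z i ⟨r.1, lt_trans r.isLt (Fin.last k).isLt⟩)
                = (fun r : Fin k => z ⟨r.1, r.isLt⟩) := by
              funext r
              exact snoc'_lt z i _ r.isLt
            have hval : snoc' z i (Fin.last k) = i := by
              rw [snoc'_last z i _ (lt_irrefl k)]
            rw [hval]
            exact congrFun (congrArg _ hctx) i
      _ = (∏ s : Fin k, Q ⟨s.1, lt_of_lt_of_le s.isLt (by omega)⟩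
            (fun r => z ⟨r.1, lt_trans r.isLt s.isLt⟩) (z s))
            * ∑ i : Fin d, Q ⟨k, hkT⟩ (fun r => z ⟨r.1, r.isLt⟩) i := by
          rw [Finset.mul_sum]
      _ = ∏ s : Fin k, Q ⟨s.1, lt_of_lt_of_le s.isLt (by omega)⟩
            (fun r => z ⟨r.1, lt_trans r.isLt s.isLt⟩) (z s) := by
          rw [(hQ ⟨k, hkT⟩ (fun r => z ⟨r.1, r.isLt⟩)).2, mul_one]
lemma marg {d T : ℕ} (Q : Model d T) (hQ : validModel Q) (t : Fin T) (y : Fin t → Fin d)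
    (i : Fin d) :
    ∑ x ∈ Finset.univ.filter (fun x : Fin T → Fin d =>
        (fun s : Fin t.1 => x ⟨s.1, lt_trans s.isLt t.isLt⟩) = y ∧ x t = i), seqProb Q x
      = ctxProb Q t y * Q t y i := by
  have hM := Mgen Q hQ (T - (t.1+1)) (t.1+1) (by omega) (snoc' y i)
  have hfil : Finset.univ.filter (fun x : Fin T → Fin d =>
      ∀ s : Fin (t.1+1), x ⟨s.1, lt_of_lt_of_le s.isLt (by omega)⟩ = snoc' y i s)
      = Finset.univ.filter (fun x : Fin T → Fin d =>
        (fun s : Fin t.1 => x ⟨s.1, lt_trans s.isLt t.isLt⟩) = y ∧ x t = i) := by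
    ext x
    simp only [Finset.mem_filter, Finset.mem_univ, true_and]
    constructor
    · intro hx
      constructor
      · funext s
        have hx' := hx ⟨s.1, by omega⟩
        rwa [snoc'_lt y i _ s.isLt] at hx'
      · have hx' := hx ⟨t.1, by omega⟩
        rwa [snoc'_last y i _ (lt_irrefl t.1)] at hx'
    · rintro ⟨h1, h2⟩ s
      by_cases hs : s.1 < t.1
      · rw [snoc'_lt y i s hs]
        exact congrFun h1 ⟨s.1, hs⟩
      · rw [snoc'_last y i s hs]
        have heq : (⟨s.1, lt_of_lt_of_le s.isLt (by omega)⟩ : Fin T) = t :=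
          Fin.ext (show s.1 = t.1 by omega)
        exact (congrArg x heq).trans h2
  rw [hfil] at hM
  rw [hM, Fin.prod_univ_castSucc]
  congr 1
  · unfold ctxProb
    refine Finset.prod_congr rfl fun s _ => ?_
    have hctx2 : (fun r : Fin (Fin.castSucc s).1 =>
          snoc' y i ⟨r.1, lt_trans r.isLt (Fin.castSucc s).isLt⟩)
        = (fun r : Fin s.1 => y ⟨r.1, lt_trans r.isLt s.isLt⟩) := by
      funext r
      exact snoc'_lt y i _ (lt_trans r.isLt s.isLt)
    have hval : snoc' y i (Fin.castSucc s) = y s := snoc'_lt y i _ s.isLt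
    rw [hval, hctx2]
    rfl
  · have hctx3 : (fun r : Fin (Fin.last t.1).1 =>
        snoc' y i ⟨r.1, lt_trans r.isLt (Fin.last t.1).isLt⟩) = y :=
      funext fun r => snoc'_lt y i _ r.isLt
    have hval3 : snoc' y i (Fin.last t.1) = i := snoc'_last y i _ (lt_irrefl t.1)
    rw [hctx3, hval3]
    rfl

lemma Lval_eq {d T : ℕ} (Q : Model d T) (hQ : validModel Q) (P : Model d T) :
    Lval Q P = ∑ t : Fin T, ∑ y : Fin t → Fin d,
      ((ctxProb Q t y : ℝ) : EReal) * obj (Q t y) (P t y) := by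
  have hw : ∀ x : Fin T → Fin d, 0 ≤ seqProb Q x :=
    fun x => Finset.prod_nonneg fun s _ => (hQ _ _).1 _
  have hctx : ∀ (t : Fin T) (y : Fin t → Fin d), 0 ≤ ctxProb Q t y :=
    fun t y => Finset.prod_nonneg fun s _ => (hQ _ _).1 _
  unfold Lval
  rw [Finset.sum_congr rfl (fun x _ => ecoe_mul_sum Finset.univ (seqProb Q x) (hw x) _)]
  rw [Finset.sum_comm]
  refine Finset.sum_congr rfl fun t _ => ?_
  calc ∑ x : Fin T → Fin d, (seqProb Q x : EReal)
          * elog (P t (fun s => x ⟨s.1, lt_trans s.isLt t.isLt⟩) (x t))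
      = ∑ p : (Fin t.1 → Fin d) × Fin d, ∑ x ∈ Finset.univ.filter (fun x : Fin T → Fin d =>
          ((fun s : Fin t.1 => x ⟨s.1, lt_trans s.isLt t.isLt⟩), x t) = p),
          (seqProb Q x : EReal) * elog (P t (fun s => x ⟨s.1, lt_trans s.isLt t.isLt⟩) (x t)) :=
        (Finset.sum_fiberwise_of_maps_to (fun x _ => Finset.mem_univ _) _).symm
    _ = ∑ p : (Fin t.1 → Fin d) × Fin d, ((∑ x ∈ Finset.univ.filter (fun x : Fin T → Fin d =>
          (fun s : Fin t.1 => x ⟨s.1, lt_trans s.isLt t.isLt⟩) = p.1 ∧ x t = p.2),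
          seqProb Q x : ℝ) : EReal) * elog (P t p.1 p.2) := ?_
    _ = ∑ p : (Fin t.1 → Fin d) × Fin d,
          ((ctxProb Q t p.1 * Q t p.1 p.2 : ℝ) : EReal) * elog (P t p.1 p.2) := ?_
    _ = ∑ y : Fin t.1 → Fin d, ∑ i : Fin d,
          ((ctxProb Q t y * Q t y i : ℝ) : EReal) * elog (P t y i) := ?_
    _ = ∑ y : Fin t.1 → Fin d, ((ctxProb Q t y : ℝ) : EReal) * obj (Q t y) (P t y) := ?_
  · refine Finset.sum_congr rfl fun p _ => ?_
    have hfe : Finset.univ.filter (fun x : Fin T → Fin d =>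
          ((fun s : Fin t.1 => x ⟨s.1, lt_trans s.isLt t.isLt⟩), x t) = p)
        = Finset.univ.filter (fun x : Fin T → Fin d =>
          (fun s : Fin t.1 => x ⟨s.1, lt_trans s.isLt t.isLt⟩) = p.1 ∧ x t = p.2) := by
      refine Finset.filter_congr fun x _ => ?_
      simp [Prod.ext_iff]
    rw [hfe, sum_ecoe_mul _ _ (fun x _ => hw x)]
    refine Finset.sum_congr rfl fun x hx => ?_
    simp only [Finset.mem_filter] at hx
    rw [hx.2.1, hx.2.2]
  · refine Finset.sum_congr rfl fun p _ => ?_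
    rw [marg Q hQ t p.1 p.2]
  · rw [← Finset.univ_product_univ, Finset.sum_product]
  · refine Finset.sum_congr rfl fun y _ => ?_
    unfold obj
    rw [ecoe_mul_sum _ _ (hctx t y)]
    refine Finset.sum_congr rfl fun i _ => ?_
    rw [EReal.coe_mul, mul_assoc]
lemma simplex_le_one {d : ℕ} {p : Fin d → ℝ} (hp : p ∈ simplex d) (i : Fin d) : p i ≤ 1 := by
  rw [← hp.2]
  exact Finset.single_le_sum (fun j _ => hp.1 j) (Finset.mem_univ i)

lemma obj_nonpos {d : ℕ} {q p : Fin d → ℝ} (hq : q ∈ simplex d) (hp : p ∈ simplex d) :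
    obj q p ≤ 0 :=
  Finset.sum_nonpos fun i _ => ecoe_mul_nonpos (hq.1 i) (elog_nonpos (simplex_le_one hp i))

/-- tokenwise decomposition of the worst-case expected log-likelihood. -/
theorem stmt4 {d T : ℕ} (hT : 1 ≤ T) (ε : ℝ) (hε : 0 < ε)
    (Phat Q : Model d T) (hPhat : validModel Phat) (hQ : validModel Q) :
    ⨅ P ∈ modelNbhd Phat ε, Lval Q P
      = ∑ t : Fin T, ∑ x : Fin t → Fin d,
          ((ctxProb Q t x : ℝ) : EReal) * ⨅ p ∈ nbhd (Phat t x) ε, obj (Q t x) p := by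
  classical
  have hSne : ∀ (t : Fin T) (y : Fin t → Fin d), (nbhd (Phat t y) ε).Nonempty := by
    intro t y
    refine ⟨Phat t y, hPhat t y, ?_⟩
    simpa [dTV, sub_self, abs_zero] using hε.le
  have hctx : ∀ (t : Fin T) (y : Fin t → Fin d), 0 ≤ ctxProb Q t y :=
    fun t y => Finset.prod_nonneg fun s _ => (hQ _ _).1 _
  have h1 := Lval_eq Q hQ
  set J := (t : Fin T) × (Fin t → Fin d) with hJ
  set S : ∀ _ : J, Set (Fin d → ℝ) := fun j => nbhd (Phat j.1 j.2) ε with hSdef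
  set g : ∀ _ : J, (Fin d → ℝ) → EReal :=
    fun j p => ((ctxProb Q j.1 j.2 : ℝ) : EReal) * obj (Q j.1 j.2) p with hgdef
  have hgen := iInf_sum_pi S (fun j => hSne j.1 j.2) g
    (fun j p hp => ecoe_mul_nonpos (hctx j.1 j.2) (obj_nonpos (hQ j.1 j.2) hp.1))
  have hL : (⨅ P ∈ modelNbhd Phat ε, Lval Q P)
      = ⨅ f ∈ {f : ∀ _ : J, Fin d → ℝ | ∀ j, f j ∈ S j}, ∑ j, g j (f j) := by
    apply le_antisymm
    · refine le_iInf₂ fun f hf => ?_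
      have hmem : (fun t x => f ⟨t, x⟩) ∈ modelNbhd Phat ε :=
        ⟨fun t x => (hf ⟨t, x⟩).1, fun t x => (hf ⟨t, x⟩).2⟩
      refine le_trans (iInf₂_le _ hmem) (le_of_eq ?_)
      rw [h1, Finset.sum_sigma', Finset.univ_sigma_univ]
    · refine le_iInf₂ fun P hP => ?_
      have hmem : (fun j : J => P j.1 j.2) ∈ {f : ∀ _ : J, Fin d → ℝ | ∀ j, f j ∈ S j} :=
        fun j => ⟨hP.1 j.1 j.2, hP.2 j.1 j.2⟩
      refine le_trans (iInf₂_le _ hmem) (le_of_eq ?_)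
      rw [h1, Finset.sum_sigma', Finset.univ_sigma_univ]
  rw [hL, hgen, Finset.sum_sigma', Finset.univ_sigma_univ]
  refine Finset.sum_congr rfl fun j _ => ?_
  exact binfi_ecoe_mul (hSne j.1 j.2) _ (hctx j.1 j.2)
end

section
/- Let p̂ ∈ Δ(V) with p̂_i > 0 for all i and Σ_i p̂_i = 1, and let 0 < ε < min_i p̂_i. Then the set of extreme points (vertices) of the convex polytope N(p̂) = {p ∈ Δ(V) : (1/2)Σ_i |p_i − p̂_i| ≤ ε} is exactly {p̂ − ε e_i + ε e_j : i ≠ j}, where e_i denotes the i-th standard basis vector of ℝ^d. -/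
open Finset

/-!
Write `u = p - p̂`. Since `|u k| ≤ dTV p p̂ ≤ ε < p̂ k` whenever `∑ u = 0`, the nonnegativity
constraints are redundant and `N(p̂) = {p̂ + u | ∑ u = 0, ∑ |u| ≤ 2ε}`.

The vertex `p̂ - ε e_i + ε e_j` is the unique maximiser of `p_j - p_i` on `N(p̂)`, hence an
exposed point. Conversely, an extreme point `q` cannot be moved to `q ± δ (e_j - e_i)` inside
`N(p̂)`. This rules out `∑ |u| < 2ε` (take `δ` small), and it rules out two coordinates `u_i, u_j`
of the same nonzero sign: for `δ ≤ min (|u_i|, |u_j|)` the move does not change `∑ |u|`, because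
the `ℓ¹` norm is linear on each closed orthant. So `∑ |u| = 2ε` with exactly one positive and one
negative coordinate, which forces `u = ε e_j - ε e_i`.
-/

theorem abs_add_eq_abs_add_sign_mul {x y : ℝ} (h : |y| ≤ |x|) :
    |x + y| = |x| + SignType.sign x * y := by
  rcases lt_trichotomy x 0 with hx | rfl | hx
  · rw [abs_of_neg hx] at h ⊢
    rw [sign_neg hx, abs_of_nonpos (by linarith [le_abs_self y])]
    simp; abel
  · simp_all
  · rw [abs_of_pos hx] at h ⊢
    rw [sign_pos hx, abs_of_nonneg (by linarith [neg_abs_le y])]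
    simp

theorem notMem_extremePoints_of_add_mem_of_sub_mem {E : Type*} [AddCommGroup E] [Module ℝ E]
    {A : Set E} {x w : E} (hw : w ≠ 0) (hadd : x + w ∈ A) (hsub : x - w ∈ A) :
    x ∉ A.extremePoints ℝ := fun hx =>
  hw (sub_eq_self.1 (hx.2 hsub hadd (mem_openSegment_sub_add x w)))

section Transfer

variable {ι : Type*} [DecidableEq ι]

def transfer (i j : ι) (δ : ℝ) : ι → ℝ := Pi.single j δ - Pi.single i δ

theorem transfer_swap (i j : ι) (δ : ℝ) : transfer j i δ = -transfer i j δ := by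
  simp [transfer]

theorem transfer_apply_left {i j : ι} (hij : i ≠ j) (δ : ℝ) : transfer i j δ i = -δ := by
  simp [transfer, hij]

theorem transfer_apply_right {i j : ι} (hij : i ≠ j) (δ : ℝ) : transfer i j δ j = δ := by
  simp [transfer, hij.symm]

theorem transfer_ne_zero {i j : ι} (hij : i ≠ j) {δ : ℝ} (hδ : δ ≠ 0) : transfer i j δ ≠ 0 :=
  fun h => hδ ((transfer_apply_right hij δ).symm.trans (congrFun h j))

theorem abs_transfer_apply_le {u : ι → ℝ} {i j : ι} {δ : ℝ} (hi : |δ| ≤ |u i|)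
    (hj : |δ| ≤ |u j|) (k : ι) : |transfer i j δ k| ≤ |u k| := by
  by_cases hki : k = i <;> by_cases hkj : k = j <;> simp_all [transfer]

theorem eq_transfer_of {u : ι → ℝ} {i j : ι} (hij : i ≠ j) {δ : ℝ} (hi : u i = -δ)
    (hj : u j = δ) (h : ∀ k, k ≠ i → k ≠ j → u k = 0) : u = transfer i j δ := by
  funext k
  by_cases hki : k = i
  · subst hki; rw [hi, transfer_apply_left hij]
  by_cases hkj : k = j
  · subst hkj; rw [hj, transfer_apply_right hij]
  simp [transfer, h k hki hkj, hki, hkj]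

variable [Fintype ι]

theorem sum_transfer (i j : ι) (δ : ℝ) : ∑ k, transfer i j δ k = 0 := by
  simp [transfer]

theorem sum_mul_transfer (s : ι → ℝ) (i j : ι) (δ : ℝ) :
    ∑ k, s k * transfer i j δ k = (s j - s i) * δ := by
  simp [transfer, mul_sub, Pi.single_apply, sub_mul]

theorem sum_abs_transfer {i j : ι} (hij : i ≠ j) (δ : ℝ) :
    ∑ k, |transfer i j δ k| = 2 * |δ| := by
  rw [Fintype.sum_eq_add i j hij (fun k hk => by simp [transfer, hk.1, hk.2])]
  simp [transfer, hij, hij.symm]; ring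

end Transfer

section SumAbs

variable {ι : Type*} [Fintype ι]

theorem two_mul_abs_le_sum_abs_of_sum_eq_zero {u : ι → ℝ} (hu : ∑ i, u i = 0) (k : ι) :
    2 * |u k| ≤ ∑ i, |u i| := by
  classical
  have hk : u k = -∑ i ∈ univ.erase k, u i := by
    rw [eq_neg_iff_add_eq_zero, add_sum_erase _ _ (mem_univ k), hu]
  have : |u k| ≤ ∑ i ∈ univ.erase k, |u i| := by
    rw [hk, abs_neg]; exact abs_sum_le_sum_abs _ _
  rw [← add_sum_erase _ _ (mem_univ k)]; linarith

theorem sum_abs_add_eq {u w : ι → ℝ} (h : ∀ i, |w i| ≤ |u i|) :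
    ∑ i, |u i + w i| = ∑ i, |u i| + ∑ i, SignType.sign (u i) * w i := by
  rw [← sum_add_distrib]; exact sum_congr rfl fun i _ => abs_add_eq_abs_add_sign_mul (h i)

theorem exists_pos_of_sum_eq_zero {u : ι → ℝ} (hu : ∑ i, u i = 0) (h : u ≠ 0) :
    ∃ i, 0 < u i := by
  by_contra! hneg
  exact h (funext fun i => (sum_eq_zero_iff_of_nonpos fun i _ => hneg i).1 hu i (mem_univ i))

variable [DecidableEq ι]

theorem eq_zero_of_sum_abs_le {u : ι → ℝ} {i j : ι} (hij : i ≠ j)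
    (h : ∑ k, |u k| ≤ |u i| + |u j|) {k : ι} (hki : k ≠ i) (hkj : k ≠ j) : u k = 0 := by
  have htriple : ∑ l ∈ {i, j, k}, |u l| ≤ ∑ l, |u l| :=
    sum_le_univ_sum_of_nonneg fun _ => abs_nonneg _
  rw [sum_insert (by simp [hij, hki.symm]), sum_pair hkj.symm] at htriple
  exact abs_eq_zero.1 (le_antisymm (by linarith) (abs_nonneg _))

theorem exists_eq_transfer_of_sign_injective {u : ι → ℝ} {ε : ℝ} (hε : 0 < ε)
    (hsum : ∑ k, u k = 0) (habs : ∑ k, |u k| = 2 * ε)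
    (hinj : ∀ a b, u a ≠ 0 → SignType.sign (u a) = SignType.sign (u b) → a = b) :
    ∃ i j, i ≠ j ∧ u = transfer i j ε := by
  have hu : u ≠ 0 := by rintro rfl; simp at habs; linarith
  obtain ⟨j, hj⟩ := exists_pos_of_sum_eq_zero hsum hu
  obtain ⟨i, hi⟩ : ∃ i, u i < 0 := by
    obtain ⟨i, hi⟩ := exists_pos_of_sum_eq_zero (u := -u) (by simp [hsum]) (neg_ne_zero.2 hu)
    exact ⟨i, by simpa using hi⟩
  have hij : i ≠ j := by rintro rfl; linarith
  have hzero : ∀ k, k ≠ i → k ≠ j → u k = 0 := by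
    intro k hki hkj
    by_contra hk
    rcases lt_or_gt_of_ne hk with hk | hk
    · exact hki (hinj k i hk.ne (by rw [sign_neg hk, sign_neg hi]))
    · exact hkj (hinj k j hk.ne' (by rw [sign_pos hk, sign_pos hj]))
  have hsum_pair : ∑ k, u k = u i + u j :=
    Fintype.sum_eq_add i j hij fun k hk => hzero k hk.1 hk.2
  have habs_pair : ∑ k, |u k| = |u i| + |u j| :=
    Fintype.sum_eq_add i j hij fun k hk => by simp [hzero k hk.1 hk.2]
  rw [abs_of_neg hi, abs_of_pos hj] at habs_pair
  exact ⟨i, j, hij, eq_transfer_of hij (by linarith) (by linarith) hzero⟩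

end SumAbs

section TotalVariation

variable {d : ℕ}

theorem abs_sub_le_dTV {p q : Fin d → ℝ} (h : ∑ i, p i = ∑ i, q i) (k : Fin d) :
    |p k - q k| ≤ dTV p q := by
  have := two_mul_abs_le_sum_abs_of_sum_eq_zero (u := p - q) (by simp [sum_sub_distrib, h]) k
  simp only [Pi.sub_apply] at this
  unfold dTV; linarith

theorem dTV_add_le (p q w : Fin d → ℝ) : dTV (p + w) q ≤ dTV p q + (∑ i, |w i|) / 2 := by
  have : ∑ i, |(p + w) i - q i| ≤ ∑ i, (|p i - q i| + |w i|) :=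
    sum_le_sum fun i _ => by simpa [add_sub_right_comm] using abs_add_le (p i - q i) (w i)
  unfold dTV; rw [sum_add_distrib] at this; linarith

theorem dTV_add_of_abs_le {p q w : Fin d → ℝ} (h : ∀ i, |w i| ≤ |p i - q i|) :
    dTV (p + w) q = dTV p q + (∑ i, SignType.sign (p i - q i) * w i) / 2 := by
  have := sum_abs_add_eq h
  simp only [← add_sub_right_comm] at this
  unfold dTV; simp only [Pi.add_apply, this]; ring

end TotalVariation

section Neighbourhood

variable {d : ℕ} {phat : Fin d → ℝ} {ε : ℝ}

theorem mem_nbhd_iff (hphat : ∑ i, phat i = 1) (hεmin : ∀ i, ε < phat i) {p : Fin d → ℝ} :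
    p ∈ nbhd phat ε ↔ ∑ i, p i = 1 ∧ dTV p phat ≤ ε := by
  refine ⟨fun hp => ⟨hp.1.2, hp.2⟩, fun ⟨hp, hdist⟩ => ⟨⟨fun k => ?_, hp⟩, hdist⟩⟩
  have := (abs_le.1 ((abs_sub_le_dTV (hp.trans hphat.symm) k).trans hdist)).1
  linarith [hεmin k]

theorem notMem_extremePoints_nbhd (hphat : ∑ i, phat i = 1) (hεmin : ∀ i, ε < phat i)
    {q : Fin d → ℝ} (hq : q ∈ nbhd phat ε) {a b : Fin d} (hab : a ≠ b) {δ : ℝ} (hδ : δ ≠ 0)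
    (hdist_ab : dTV (q + transfer a b δ) phat ≤ ε)
    (hdist_ba : dTV (q + transfer b a δ) phat ≤ ε) :
    q ∉ (nbhd phat ε).extremePoints ℝ := by
  have hmem : ∀ {i j : Fin d}, dTV (q + transfer i j δ) phat ≤ ε →
      q + transfer i j δ ∈ nbhd phat ε := fun h =>
    (mem_nbhd_iff hphat hεmin).2 ⟨by simp [sum_add_distrib, sum_transfer, hq.1.2], h⟩
  refine notMem_extremePoints_of_add_mem_of_sub_mem (transfer_ne_zero hab hδ)
    (hmem hdist_ab) ?_
  rw [sub_eq_add_neg, ← transfer_swap]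
  exact hmem hdist_ba

theorem dTV_eq_of_mem_extremePoints_nbhd (hd : 2 ≤ d) (hphat : ∑ i, phat i = 1)
    (hεmin : ∀ i, ε < phat i) {q : Fin d → ℝ} (hq : q ∈ (nbhd phat ε).extremePoints ℝ) :
    dTV q phat = ε := by
  by_contra hne
  have hδ : 0 < ε - dTV q phat := sub_pos.2 (lt_of_le_of_ne hq.1.2 hne)
  have hclose : ∀ {i j : Fin d}, i ≠ j → dTV (q + transfer i j (ε - dTV q phat)) phat ≤ ε :=
    fun {i j} hij => by
      have := dTV_add_le q phat (transfer i j (ε - dTV q phat))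
      rw [sum_abs_transfer hij, abs_of_pos hδ] at this
      linarith
  have hab : (⟨0, by omega⟩ : Fin d) ≠ ⟨1, by omega⟩ := by simp [Fin.ext_iff]
  exact notMem_extremePoints_nbhd hphat hεmin hq.1 hab hδ.ne' (hclose hab) (hclose hab.symm)
    hq

theorem eq_of_sign_eq_of_mem_extremePoints_nbhd (hphat : ∑ i, phat i = 1)
    (hεmin : ∀ i, ε < phat i) {q : Fin d → ℝ} (hq : q ∈ (nbhd phat ε).extremePoints ℝ)
    {a b : Fin d} (ha : q a ≠ phat a)
    (hsign : SignType.sign (q a - phat a) = SignType.sign (q b - phat b)) : a = b := by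
  by_contra hab
  have hb : q b ≠ phat b := by
    rintro hb
    rw [hb, sub_self, sign_zero, sign_eq_zero_iff, sub_eq_zero] at hsign
    exact ha hsign
  set δ := min |q a - phat a| |q b - phat b|
  have hδ : 0 < δ := lt_min (abs_pos.2 (sub_ne_zero.2 ha)) (abs_pos.2 (sub_ne_zero.2 hb))
  have hδa : |δ| ≤ |q a - phat a| := by rw [abs_of_pos hδ]; exact min_le_left _ _
  have hδb : |δ| ≤ |q b - phat b| := by rw [abs_of_pos hδ]; exact min_le_right _ _
  have hdist_ab : dTV (q + transfer a b δ) phat = dTV q phat := by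
    rw [dTV_add_of_abs_le (abs_transfer_apply_le hδa hδb), sum_mul_transfer, hsign]; simp
  have hdist_ba : dTV (q + transfer b a δ) phat = dTV q phat := by
    rw [dTV_add_of_abs_le (abs_transfer_apply_le hδb hδa), sum_mul_transfer, hsign]; simp
  exact notMem_extremePoints_nbhd hphat hεmin hq.1 hab hδ.ne' (hdist_ab.trans_le hq.1.2)
    (hdist_ba.trans_le hq.1.2) hq

theorem exists_eq_add_transfer_of_mem_extremePoints_nbhd (hd : 2 ≤ d)
    (hphat : ∑ i, phat i = 1) (hε : 0 < ε) (hεmin : ∀ i, ε < phat i) {q : Fin d → ℝ}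
    (hq : q ∈ (nbhd phat ε).extremePoints ℝ) :
    ∃ i j, i ≠ j ∧ q = phat + transfer i j ε := by
  have hdist := dTV_eq_of_mem_extremePoints_nbhd hd hphat hεmin hq
  obtain ⟨i, j, hij, h⟩ := exists_eq_transfer_of_sign_injective (u := q - phat) hε
    (by simp [sum_sub_distrib, hq.1.1.2, hphat]) (by unfold dTV at hdist; simp; linarith)
    fun _ _ ha hsign =>
      eq_of_sign_eq_of_mem_extremePoints_nbhd hphat hεmin hq (sub_ne_zero.1 ha) hsign
  exact ⟨i, j, hij, by rw [← h, add_sub_cancel]⟩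

theorem add_transfer_mem_exposedPoints_nbhd (hphat : ∑ i, phat i = 1) (hε : 0 ≤ ε)
    (hεmin : ∀ i, ε < phat i) {i j : Fin d} (hij : i ≠ j) :
    phat + transfer i j ε ∈ (nbhd phat ε).exposedPoints ℝ := by
  refine ⟨(mem_nbhd_iff hphat hεmin).2 ⟨?_, ?_⟩,
    .proj (R := ℝ) (φ := fun _ => ℝ) j - .proj i, fun p hp => ?_⟩
  · simp [sum_add_distrib, sum_transfer, hphat]
  · simp [dTV, sum_abs_transfer hij, abs_of_nonneg hε]
  obtain ⟨hps, hpd⟩ := (mem_nbhd_iff hphat hεmin).1 hp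
  have hclose k : |p k - phat k| ≤ ε := (abs_sub_le_dTV (hps.trans hphat.symm) k).trans hpd
  have hi := abs_le.1 (hclose i)
  have hj := abs_le.1 (hclose j)
  simp only [sub_apply, ContinuousLinearMap.proj_apply, Pi.add_apply,
    transfer_apply_left hij, transfer_apply_right hij]
  refine ⟨by linarith, fun hle => ?_⟩
  have hpi : p i - phat i = -ε := by linarith
  have hpj : p j - phat j = ε := by linarith
  have hbudget : ∑ k, |(p - phat) k| ≤ |(p - phat) i| + |(p - phat) j| := by
    unfold dTV at hpd
    simp only [Pi.sub_apply, hpi, hpj, abs_neg, abs_of_nonneg hε]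
    linarith
  have hrest : ∀ k, k ≠ i → k ≠ j → p k - phat k = 0 := fun _ hki hkj =>
    eq_zero_of_sum_abs_le hij hbudget hki hkj
  rw [← eq_transfer_of (u := p - phat) hij hpi hpj hrest, add_sub_cancel]

end Neighbourhood

theorem stmt8_general {d : ℕ} (hd : 2 ≤ d) (phat : Fin d → ℝ)
    (hmem : phat ∈ simplex d)
    (ε : ℝ) (hε : 0 < ε) (hεmin : ∀ i, ε < phat i) :
    Set.extremePoints ℝ (nbhd phat ε)
      = {p : Fin d → ℝ | ∃ i j : Fin d, i ≠ j ∧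
          p = fun k => phat k - (if k = i then ε else 0) + (if k = j then ε else 0)} := by
  have hvertex (i j : Fin d) : (fun k => phat k - (if k = i then ε else 0) +
      (if k = j then ε else 0)) = phat + transfer i j ε := by
    funext k; simp [transfer, Pi.single_apply]; ring
  simp only [hvertex]
  ext q
  refine ⟨exists_eq_add_transfer_of_mem_extremePoints_nbhd hd hmem.2 hε hεmin, ?_⟩
  rintro ⟨i, j, hij, rfl⟩
  exact exposedPoints_subset_extremePoints
    (add_transfer_mem_exposedPoints_nbhd hmem.2 hε.le hεmin hij)

/-- for `0 < ε < min_i p̂_i`, the extreme points of the TV-ball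
polytope `N(p̂)` are exactly the vectors `p̂ − ε e_i + ε e_j`, `i ≠ j`. -/
theorem stmt8 {d : ℕ} (hd : 2 ≤ d) (phat : Fin d → ℝ)
    (hmem : phat ∈ simplex d)
    (hpos : ∀ i, 0 < phat i)
    (ε : ℝ) (hε : 0 < ε) (hεmin : ∀ i, ε < phat i) :
    Set.extremePoints ℝ (nbhd phat ε)
      = {p : Fin d → ℝ | ∃ i j : Fin d, i ≠ j ∧
          p = fun k => phat k - (if k = i then ε else 0) + (if k = j then ε else 0)} :=
  stmt8_general hd phat hmem ε hε hεmin
end
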